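/- If a finite connected graph G admits a rooted tree decomposition (T,β) of width k and adhesion width ℓ, then G also admits a connectivity-sensitive rooted tree decomposition (T',β') of width at most k and adhesion width at most ℓ such that every bag of (T',β') is a subset of some bag of (T,β). -/

import Mathlib

/-!
Common definitions: separations, stable separations, the improved graph,
external neighbourhoods, connected components, clique separations, and
rooted tree decompositions together with treewidth.
-/

section Defs

variable {V : Type} [Fintype V] [DecidableEq V]

/-- A separation of a graph `G`: a pair `(A, B)` covering the vertex set with no
edge between `A \ B` and `B \ A`.  Its order is `(A ∩ B).card`. -/
def IsSeparation (G : SimpleGraph V) (A B : Finset V) : Prop :=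
  A ∪ B = Finset.univ ∧ ∀ a ∈ A, a ∉ B → ∀ b ∈ B, b ∉ A → ¬G.Adj a b

/-- An `X`–`Y` separation: a separation `(A, B)` with `X ⊆ A` and `Y ⊆ B`. -/
def IsSepFor (G : SimpleGraph V) (X Y A B : Finset V) : Prop :=
  IsSeparation G A B ∧ X ⊆ A ∧ Y ⊆ B

/-- An `X`–`Y` separation of minimum possible order. -/
def IsMinSepFor (G : SimpleGraph V) (X Y A B : Finset V) : Prop :=
  IsSepFor G X Y A B ∧ ∀ A' B', IsSepFor G X Y A' B' → (A ∩ B).card ≤ (A' ∩ B').card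

/-- A separation `(A, B)` is `S`-stable if it is a minimum-order `S_L`–`S_R`
separation for some partition `(S_L, S_R)` of `S`. -/
def IsStable (G : SimpleGraph V) (S A B : Finset V) : Prop :=
  ∃ SL SR, Disjoint SL SR ∧ SL ∪ SR = S ∧ IsMinSepFor G SL SR A B

/-- `conn_G(x, y) < k`: there is a separation of order `< k` with `x ∈ A ∖ B` and
`y ∈ B ∖ A`.  (For adjacent `x, y` no such separation exists, i.e. `conn = +∞`.) -/
def ConnLt (G : SimpleGraph V) (x y : V) (k : ℕ) : Prop :=
  ∃ A B, IsSeparation G A B ∧ x ∈ A ∧ x ∉ B ∧ y ∈ B ∧ y ∉ A ∧ (A ∩ B).card < k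

/-- A graph is `k`-complemented when `conn(x,y) ≥ k` implies that `x` and `y` are
adjacent; equivalently, any two distinct nonadjacent vertices are separated by a
separation of order `< k`. -/
def KComplemented (G : SimpleGraph V) (k : ℕ) : Prop :=
  ∀ x y, x ≠ y → ¬G.Adj x y → ConnLt G x y k

lemma IsSeparation.symm2 {G : SimpleGraph V} {A B : Finset V} (h : IsSeparation G A B) :
    IsSeparation G B A :=
  ⟨by rw [Finset.union_comm]; exact h.1,
   fun a ha ha' b hb hb' hadj => h.2 b hb hb' a ha ha' hadj.symm⟩

/-- The `k`-improved graph `G^{(k)}`: same vertices, and `xy` is an edge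
iff `conn_G(x,y) ≥ k` (in particular all edges of `G` are kept). -/
def improvedGraph (G : SimpleGraph V) (k : ℕ) : SimpleGraph V where
  Adj x y := x ≠ y ∧ ¬ConnLt G x y k
  symm := by
    constructor
    rintro x y ⟨hxy, h⟩
    refine ⟨hxy.symm, ?_⟩
    rintro ⟨A, B, hsep, hy, hy', hx, hx', hc⟩
    exact h ⟨B, A, hsep.symm2, hx, hx', hy, hy', by rwa [Finset.inter_comm]⟩
  loopless := ⟨fun x h => h.1 rfl⟩

/-- The external neighbourhood `N_G(Z)`: vertices outside `Z` with a neighbour in `Z`. -/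
def extNbhd (G : SimpleGraph V) (Z : Set V) : Set V :=
  {v | v ∉ Z ∧ ∃ z ∈ Z, G.Adj v z}

/-- `Z` is the vertex set of a connected component of `G - X`: it is disjoint from `X`,
induces a connected subgraph, and all its neighbours outside itself lie in `X`. -/
def IsCompAway (G : SimpleGraph V) (X Z : Set V) : Prop :=
  Disjoint Z X ∧ (G.induce Z).Connected ∧
    ∀ ⦃v z : V⦄, z ∈ Z → G.Adj v z → v ∉ Z → v ∈ X

/-- The subgraph of `G` induced on `W` admits no clique separation: there is no
separation `(A, B)` of `G[W]` with `A ∖ B ≠ ∅`, `B ∖ A ≠ ∅` and `A ∩ B` a clique. -/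
def CliqueSepFreeOn (G : SimpleGraph V) (W : Finset V) : Prop :=
  ¬∃ A B : Finset V, A ∪ B = W ∧
      (∀ a ∈ A, a ∉ B → ∀ b ∈ B, b ∉ A → ¬G.Adj a b) ∧
      (A \ B).Nonempty ∧ (B \ A).Nonempty ∧ G.IsClique (↑(A ∩ B) : Set V)

/-- A rooted tree decomposition of the subgraph of `G` induced on `W`.
The rooted tree is given by a finite node type with a parent function
(every node reaches the root by iterating `parent`);
for every vertex of `W` the nodes whose bags contain it form a nonempty connected
subtree, and every edge of `G[W]` lies inside some bag. -/
structure RTDOn (V : Type) [Fintype V] [DecidableEq V] (G : SimpleGraph V) (W : Finset V) where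
  ι : Type
  instFintype : Fintype ι
  instDecEq : DecidableEq ι
  root : ι
  parent : ι → ι
  parent_root : parent root = root
  reaches_root : ∀ t, ∃ n, parent^[n] t = root
  bag : ι → Finset V
  bag_subset : ∀ t, bag t ⊆ W
  bags_connected : ∀ v ∈ W,
    ((SimpleGraph.fromRel fun s t => parent s = t).induce {t | v ∈ bag t}).Connected
  edge_in_bag : ∀ u ∈ W, ∀ v ∈ W, G.Adj u v → ∃ t, u ∈ bag t ∧ v ∈ bag t

/-- A rooted tree decomposition of `G`. -/
abbrev RTD (V : Type) [Fintype V] [DecidableEq V] (G : SimpleGraph V) : Type 1 :=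
  RTDOn V G Finset.univ

namespace RTDOn

variable {G : SimpleGraph V} {W : Finset V}

instance (D : RTDOn V G W) : Fintype D.ι := D.instFintype
instance (D : RTDOn V G W) : DecidableEq D.ι := D.instDecEq

/-- The decomposition has width at most `w`, i.e. all bags have size at most `w + 1`. -/
def widthLe (D : RTDOn V G W) (w : ℕ) : Prop := ∀ t, (D.bag t).card ≤ w + 1

/-- The decomposition has adhesion width at most `ℓ`: for every tree edge
`(t, parent t)` the intersection of the two bags has size at most `ℓ`. -/
def adhesionLe (D : RTDOn V G W) (l : ℕ) : Prop :=
  ∀ t, t ≠ D.root → (D.bag t ∩ D.bag (D.parent t)).card ≤ l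

/-- A family of potential bags captures a decomposition if every bag belongs to it. -/
def captures (D : RTDOn V G W) (ℬ : Finset (Finset V)) : Prop := ∀ t, D.bag t ∈ ℬ

/-- `γ(t)`: union of the bags at all descendants of `t`. -/
def gammaSet (D : RTDOn V G W) (t : D.ι) : Set V :=
  {v | ∃ s, (∃ n, D.parent^[n] s = t) ∧ v ∈ D.bag s}

/-- `σ(t)`: the adhesion of `t` with its parent (empty at the root). -/
def sigmaBag (D : RTDOn V G W) (t : D.ι) : Finset V :=
  if t = D.root then ∅ else D.bag t ∩ D.bag (D.parent t)

/-- `α(t) = γ(t) ∖ σ(t)`. -/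
def alphaSet (D : RTDOn V G W) (t : D.ι) : Set V := D.gammaSet t \ ↑(D.sigmaBag t)

end RTDOn

/-- A rooted tree decomposition is connectivity-sensitive when every `G[α(t)]`
is connected and `σ(t) = N_G(α(t))`. -/
def IsCSDecomp {G : SimpleGraph V} (D : RTD V G) : Prop :=
  ∀ t, (G.induce (D.alphaSet t)).Connected ∧ extNbhd G (D.alphaSet t) = ↑(D.sigmaBag t)

/-- The treewidth of `G`: the least `w` such that `G` has a (rooted) tree
decomposition of width at most `w`. -/
noncomputable def treewidth (G : SimpleGraph V) : ℕ :=
  sInf {w : ℕ | ∃ D : RTD V G, D.widthLe w}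

/-- `ℬ^{≤q}`: all sets of size at most `q` contained in some member of `ℬ`. -/
def belowFam (ℬ : Finset (Finset V)) (q : ℕ) : Finset (Finset V) :=
  Finset.univ.filter fun X => X.card ≤ q ∧ ∃ B ∈ ℬ, X ⊆ B

end Defs


/-!
Split every node `t` of `D` into one node `(t, C)` for each component `C` of `G[α(t)]`, with bag
`β(t) ∩ (C ∪ N(C))`; the parent of `(t, C)` is `(parent t, C')` for the component `C'` of
`G[α(parent t)]` containing `C`. Bags only shrink, so width, adhesion and the containment in old
bags are inherited. Since a vertex of `α(t)` occurs only in bags below `t`, every edge leaving `C`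
ends in `σ(t)`, i.e. `N(C) ⊆ σ(t)`; from this, in the new decomposition `γ(t, C) = C ∪ N(C)` and
`σ(t, C) = N(C)`, hence `α(t, C) = C`.
-/

namespace SimpleGraph

variable {V : Type*} (G : SimpleGraph V)

def componentIn (s : Set V) (v : V) : Set V :=
  ⋃₀ {t | t ⊆ s ∧ v ∈ t ∧ (G.induce t).Connected}

variable {G} {s : Set V} {u v x z : V}

lemma mem_componentIn_iff :
    u ∈ G.componentIn s v ↔ ∃ t ⊆ s, v ∈ t ∧ u ∈ t ∧ (G.induce t).Connected := by
  simp only [componentIn, Set.mem_sUnion]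
  grind

lemma componentIn_subset : G.componentIn s v ⊆ s :=
  Set.sUnion_subset fun _ ht => ht.1

lemma mem_componentIn_self (hv : v ∈ s) : v ∈ G.componentIn s v :=
  mem_componentIn_iff.2 ⟨{v}, by simpa using hv, rfl, rfl, by simp⟩

lemma connected_induce_componentIn (hv : v ∈ s) : (G.induce (G.componentIn s v)).Connected :=
  induce_sUnion_connected_of_pairwise_not_disjoint
    ⟨{v}, by simpa using hv, rfl, by simp⟩
    (fun ht ht' => ⟨v, ht.2.1, ht'.2.1⟩) fun ht => ht.2.2

lemma mem_componentIn_of_adj (hz : z ∈ G.componentIn s v) (hadj : G.Adj z x) (hx : x ∈ s) :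
    x ∈ G.componentIn s v := by
  obtain ⟨t, hts, hvt, hzt, ht⟩ := mem_componentIn_iff.1 hz
  refine mem_componentIn_iff.2 ⟨t ∪ {x}, Set.union_subset hts (by simpa using hx),
    Or.inl hvt, Or.inr rfl, connected_induce_union ht.preconnected ?_ hzt rfl hadj⟩
  simp [Preconnected]

lemma componentIn_mono {s' : Set V} (h : s ⊆ s') : G.componentIn s v ⊆ G.componentIn s' v :=
  fun _ hx => by
    obtain ⟨t, hts, ht⟩ := mem_componentIn_iff.1 hx
    exact mem_componentIn_iff.2 ⟨t, hts.trans h, ht⟩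

lemma mem_componentIn_comm (hu : u ∈ G.componentIn s v) : v ∈ G.componentIn s u := by
  obtain ⟨t, hts, hvt, hut, ht⟩ := mem_componentIn_iff.1 hu
  exact mem_componentIn_iff.2 ⟨t, hts, hut, hvt, ht⟩

lemma componentIn_subset_of_mem (hu : u ∈ G.componentIn s v) :
    G.componentIn s u ⊆ G.componentIn s v := by
  intro x hx
  obtain ⟨t, hts, hvt, hut, ht⟩ := mem_componentIn_iff.1 hu
  obtain ⟨t', hts', hut', hxt', ht'⟩ := mem_componentIn_iff.1 hx
  exact mem_componentIn_iff.2 ⟨t ∪ t', Set.union_subset hts hts', Or.inl hvt, Or.inr hxt',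
    induce_union_connected ht.preconnected ht'.preconnected ⟨u, hut, hut'⟩⟩

lemma componentIn_eq_of_mem (hu : u ∈ G.componentIn s v) :
    G.componentIn s u = G.componentIn s v :=
  (componentIn_subset_of_mem hu).antisymm (componentIn_subset_of_mem (mem_componentIn_comm hu))

lemma Connected.componentIn_univ (hG : G.Connected) (v : V) :
    G.componentIn Set.univ v = Set.univ := by
  refine Set.eq_univ_of_forall fun u => mem_componentIn_iff.2 ?_
  obtain ⟨w⟩ := hG.preconnected v u
  exact ⟨_, Set.subset_univ _, w.start_mem_support, w.end_mem_support,
    w.connected_induce_support⟩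

lemma reachable_induce_fromRel_apply {ι : Type*} {f : ι → ι} {S : Set ι} {p : ι}
    (hp : p ∈ S) (hfp : f p ∈ S) :
    ((fromRel fun s t => f s = t).induce S).Reachable ⟨p, hp⟩ ⟨f p, hfp⟩ := by
  by_cases h : p = f p
  · exact (Subtype.ext h : (⟨p, hp⟩ : S) = ⟨f p, hfp⟩) ▸ Reachable.refl _
  · exact Adj.reachable (show (fromRel fun s t => f s = t).Adj p (f p)
      from (fromRel_adj _ _ _).2 ⟨h, Or.inl rfl⟩)

end SimpleGraph

lemma union_extNbhd_subset_union_extNbhd {V : Type} [Fintype V] [DecidableEq V]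
    {G : SimpleGraph V} {C C' : Set V} (h : C ⊆ C') :
    C ∪ extNbhd G C ⊆ C' ∪ extNbhd G C' := by
  rintro x (hx | ⟨hxC, z, hz, hadj⟩)
  · exact Or.inl (h hx)
  · by_cases hxC' : x ∈ C'
    · exact Or.inl hxC'
    · exact Or.inr ⟨hxC', z, h hz, hadj⟩

namespace RTDOn

variable {V : Type} [Fintype V] [DecidableEq V] {G : SimpleGraph V}

section

variable {W : Finset V} (D : RTDOn V G W)

def IsDesc (s t : D.ι) : Prop := ∃ n, D.parent^[n] s = t

variable {D}

lemma IsDesc.refl (t : D.ι) : D.IsDesc t t := ⟨0, rfl⟩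

lemma isDesc_parent (t : D.ι) : D.IsDesc t (D.parent t) := ⟨1, rfl⟩

lemma isDesc_root (t : D.ι) : D.IsDesc t D.root := D.reaches_root t

lemma IsDesc.trans {a b c : D.ι} (hab : D.IsDesc a b) (hbc : D.IsDesc b c) : D.IsDesc a c := by
  obtain ⟨n, rfl⟩ := hab
  obtain ⟨m, rfl⟩ := hbc
  exact ⟨m + n, Function.iterate_add_apply _ _ _ _⟩

lemma iterate_parent_root (n : ℕ) : D.parent^[n] D.root = D.root :=
  Function.iterate_fixed D.parent_root n

lemma IsDesc.parent_of_ne {s t : D.ι} (h : D.IsDesc s t) (hne : s ≠ t) :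
    D.IsDesc (D.parent s) t := by
  obtain ⟨_ | n, rfl⟩ := h
  · exact absurd rfl hne
  · exact ⟨n, (Function.iterate_succ_apply _ _ _).symm⟩

lemma eq_root_of_isPeriodicPt {t : D.ι} {n : ℕ} (hn : 0 < n)
    (h : Function.IsPeriodicPt D.parent n t) : t = D.root := by
  obtain ⟨N, hN⟩ := D.reaches_root t
  calc t = D.parent^[n * N - N + N] t := by
        rw [Nat.sub_add_cancel (Nat.le_mul_of_pos_left N hn)]
        exact ((h.mul_const N).eq).symm
    _ = D.root := by rw [Function.iterate_add_apply, hN, iterate_parent_root]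

lemma IsDesc.antisymm {a b : D.ι} (hab : D.IsDesc a b) (hba : D.IsDesc b a) : a = b := by
  obtain ⟨n, rfl⟩ := hab
  obtain ⟨m, hm⟩ := hba
  rcases Nat.eq_zero_or_pos (m + n) with hmn | hmn
  · obtain ⟨rfl, rfl⟩ : m = 0 ∧ n = 0 := by omega
    rfl
  have ha : a = D.root := eq_root_of_isPeriodicPt hmn (by
    rw [Function.IsPeriodicPt, Function.IsFixedPt, Function.iterate_add_apply, hm])
  rw [ha, iterate_parent_root]

lemma not_isDesc_parent {t : D.ι} (ht : t ≠ D.root) : ¬ D.IsDesc (D.parent t) t := fun h =>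
  ht (eq_root_of_isPeriodicPt one_pos (h.antisymm (isDesc_parent t)))

lemma mem_and_parent_mem_of_walk {S : Set D.ι} {t : D.ι} {a b : S}
    (w : ((SimpleGraph.fromRel fun s t => D.parent s = t).induce S).Walk a b)
    (ha : ¬ D.IsDesc a t) (hb : D.IsDesc b t) : t ∈ S ∧ D.parent t ∈ S := by
  induction w with
  | nil => exact absurd hb ha
  | @cons p q r hadj w ih =>
    by_cases hq : D.IsDesc q t
    · obtain ⟨-, hpq | hqp⟩ := (SimpleGraph.fromRel_adj (fun s t => D.parent s = t) p q).1 hadj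
      · exact absurd ((isDesc_parent (p : D.ι)).trans (hpq ▸ hq)) ha
      · by_cases hqt : (q : D.ι) = t
        · exact ⟨hqt ▸ q.2, hqt ▸ hqp ▸ p.2⟩
        · exact absurd (hqp ▸ hq.parent_of_ne hqt) ha
    · exact ih hq hb

lemma exists_mem_root_or_parent_not_mem {S : Set D.ι} {t : D.ι} (ht : t ∈ S) :
    ∃ s ∈ S, s = D.root ∨ D.parent s ∉ S := by
  by_contra! h
  obtain ⟨n, hn⟩ := D.reaches_root t
  have hmem : ∀ m, D.parent^[m] t ∈ S := fun m => by
    induction m with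
    | zero => exact ht
    | succ m ih => rw [Function.iterate_succ_apply']; exact (h _ ih).2
  exact (h _ (hmem n)).1 hn

variable {v : V}

lemma sigmaBag_root : D.sigmaBag D.root = ∅ := if_pos rfl

lemma sigmaBag_of_ne_root {t : D.ι} (ht : t ≠ D.root) :
    D.sigmaBag t = D.bag t ∩ D.bag (D.parent t) := if_neg ht

lemma sigmaBag_subset_bag (t : D.ι) : D.sigmaBag t ⊆ D.bag t := by
  unfold sigmaBag; split_ifs
  exacts [Finset.empty_subset _, Finset.inter_subset_left]

lemma sigmaBag_subset_bag_parent (t : D.ι) : D.sigmaBag t ⊆ D.bag (D.parent t) := by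
  unfold sigmaBag; split_ifs
  exacts [Finset.empty_subset _, Finset.inter_subset_right]

lemma mem_alphaSet_of_mem_bag {t : D.ι} (h : v ∈ D.bag t) (h' : v ∉ D.sigmaBag t) :
    v ∈ D.alphaSet t :=
  ⟨⟨t, IsDesc.refl t, h⟩, h'⟩

lemma isDesc_of_mem_alphaSet {s t : D.ι} (hv : v ∈ D.alphaSet t) (hs : v ∈ D.bag s) :
    D.IsDesc s t := by
  obtain ⟨⟨s₀, hs₀t, hs₀⟩, hvσ⟩ := hv
  by_contra hst
  have ht : t ≠ D.root := fun ht => hst (ht ▸ isDesc_root s)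
  obtain ⟨w⟩ := (D.bags_connected v (D.bag_subset s hs)).preconnected ⟨s, hs⟩ ⟨s₀, hs₀⟩
  obtain ⟨hvt, hvpt⟩ := mem_and_parent_mem_of_walk w hst hs₀t
  exact hvσ (by simpa [sigmaBag_of_ne_root ht] using And.intro hvt hvpt)

lemma notMem_bag_parent_of_mem_alphaSet {t : D.ι} (ht : t ≠ D.root) (hv : v ∈ D.alphaSet t) :
    v ∉ D.bag (D.parent t) := fun h => not_isDesc_parent ht (isDesc_of_mem_alphaSet hv h)

lemma mem_bag_parent {a b : D.ι} (ha : v ∈ D.bag a) (hb : v ∈ D.bag b) (hab : D.IsDesc a b)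
    (hne : a ≠ b) : v ∈ D.bag (D.parent a) := by
  by_contra hpa
  have hσ : v ∉ D.sigmaBag a := fun h => hpa (sigmaBag_subset_bag_parent a h)
  exact hne (hab.antisymm (isDesc_of_mem_alphaSet (mem_alphaSet_of_mem_bag ha hσ) hb))

lemma exists_mem_bag_mem_alphaSet (hv : v ∈ W) : ∃ t, v ∈ D.bag t ∧ v ∈ D.alphaSet t := by
  obtain ⟨⟨t₀, ht₀⟩⟩ := (D.bags_connected v hv).nonempty
  obtain ⟨t, ht, hroot | hpt⟩ := exists_mem_root_or_parent_not_mem (S := {t | v ∈ D.bag t}) ht₀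
  · exact ⟨t, ht, mem_alphaSet_of_mem_bag ht (by simp [hroot, sigmaBag_root])⟩
  · exact ⟨t, ht, mem_alphaSet_of_mem_bag ht fun h => hpt (sigmaBag_subset_bag_parent t h)⟩

lemma alphaSet_subset_alphaSet_parent (t : D.ι) : D.alphaSet t ⊆ D.alphaSet (D.parent t) := by
  by_cases ht : t = D.root
  · rw [ht, D.parent_root]
  intro v hv
  obtain ⟨⟨s, hst, hs⟩, -⟩ := id hv
  exact ⟨⟨s, IsDesc.trans hst (isDesc_parent t), hs⟩, fun h =>
    notMem_bag_parent_of_mem_alphaSet ht hv (sigmaBag_subset_bag _ h)⟩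

end

variable {D : RTD V G} {u v : V}

lemma alphaSet_root : D.alphaSet D.root = Set.univ := by
  refine Set.eq_univ_of_forall fun v => ?_
  obtain ⟨t, ht, -⟩ := exists_mem_bag_mem_alphaSet (D := D) (Finset.mem_univ v)
  exact ⟨⟨t, isDesc_root t, ht⟩, by simp [sigmaBag_root]⟩

lemma extNbhd_componentIn_subset_sigmaBag {t : D.ι} :
    extNbhd G (G.componentIn (D.alphaSet t) u) ⊆ D.sigmaBag t := by
  rintro x ⟨hxC, z, hzC, hxz⟩
  obtain ⟨s, hxs, hzs⟩ := D.edge_in_bag x (Finset.mem_univ x) z (Finset.mem_univ z) hxz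
  have hst : D.IsDesc s t := isDesc_of_mem_alphaSet (SimpleGraph.componentIn_subset hzC) hzs
  by_contra hxσ
  exact hxC (SimpleGraph.mem_componentIn_of_adj hzC hxz.symm ⟨⟨s, hst, hxs⟩, hxσ⟩)

variable (D) in
@[ext]
structure CompNode where
  node : D.ι
  comp : Set V
  exists_eq_componentIn : ∃ v ∈ D.alphaSet node, comp = G.componentIn (D.alphaSet node) v

namespace CompNode

variable (p q : D.CompNode)

noncomputable def rep : V := p.exists_eq_componentIn.choose

lemma rep_mem : p.rep ∈ D.alphaSet p.node := p.exists_eq_componentIn.choose_spec.1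

lemma comp_eq : p.comp = G.componentIn (D.alphaSet p.node) p.rep :=
  p.exists_eq_componentIn.choose_spec.2

variable {p q}

lemma comp_eq_of_mem (hu : u ∈ p.comp) : p.comp = G.componentIn (D.alphaSet p.node) u := by
  rw [comp_eq] at hu ⊢
  exact (SimpleGraph.componentIn_eq_of_mem hu).symm

lemma comp_subset_alphaSet : p.comp ⊆ D.alphaSet p.node :=
  p.comp_eq ▸ SimpleGraph.componentIn_subset

lemma extNbhd_comp_subset_sigmaBag : extNbhd G p.comp ⊆ D.sigmaBag p.node :=
  p.comp_eq ▸ extNbhd_componentIn_subset_sigmaBag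

lemma eq_of_mem_comp (h : p.node = q.node) (hp : u ∈ p.comp) (hq : u ∈ q.comp) : p = q :=
  CompNode.ext h ((comp_eq_of_mem hp).trans (h ▸ comp_eq_of_mem hq).symm)

instance : Finite D.CompNode :=
  Finite.of_injective (fun p => (p.node, p.comp)) fun _ _ h =>
    CompNode.ext (congrArg Prod.fst h) (congrArg Prod.snd h)

def ofMem {t : D.ι} (hu : u ∈ D.alphaSet t) : D.CompNode :=
  ⟨t, G.componentIn (D.alphaSet t) u, u, hu, rfl⟩

lemma mem_comp_ofMem {t : D.ι} (hu : u ∈ D.alphaSet t) : u ∈ (ofMem hu).comp :=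
  SimpleGraph.mem_componentIn_self hu

variable (p) in
noncomputable def parent : D.CompNode := ofMem (alphaSet_subset_alphaSet_parent p.node p.rep_mem)

lemma node_parent : p.parent.node = D.parent p.node := rfl

lemma comp_subset_comp_parent : p.comp ⊆ p.parent.comp :=
  p.comp_eq ▸ SimpleGraph.componentIn_mono (alphaSet_subset_alphaSet_parent p.node)

lemma node_iterate_parent (n : ℕ) : (parent^[n] p).node = D.parent^[n] p.node := by
  induction n generalizing p with
  | zero => rfl
  | succ n ih => rw [Function.iterate_succ_apply, Function.iterate_succ_apply, ih, node_parent]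

lemma comp_subset_comp_iterate_parent (n : ℕ) : p.comp ⊆ (parent^[n] p).comp := by
  induction n generalizing p with
  | zero => exact subset_rfl
  | succ n ih => exact comp_subset_comp_parent.trans (ih (p := p.parent))

open Classical in
variable (p) in
noncomputable def bag : Finset V := {x ∈ D.bag p.node | x ∈ p.comp ∪ extNbhd G p.comp}

lemma mem_bag : v ∈ p.bag ↔ v ∈ D.bag p.node ∧ v ∈ p.comp ∪ extNbhd G p.comp := by
  simp [bag]

lemma bag_subset : p.bag ⊆ D.bag p.node := by
  classical exact Finset.filter_subset _ _

lemma mem_bag_ofMem {t : D.ι} (hvα : v ∈ D.alphaSet t) (hvt : v ∈ D.bag t) :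
    v ∈ (ofMem hvα).bag :=
  mem_bag.2 ⟨hvt, Or.inl (mem_comp_ofMem hvα)⟩

lemma mem_bag_of_mem_extNbhd (hv : v ∈ extNbhd G p.comp) : v ∈ p.bag :=
  mem_bag.2 ⟨sigmaBag_subset_bag _ (extNbhd_comp_subset_sigmaBag hv), Or.inr hv⟩

lemma mem_comp_of_mem_bag (hp : v ∈ p.bag) (hv : v ∈ D.alphaSet p.node) : v ∈ p.comp :=
  ((mem_bag.1 hp).2).resolve_right fun h => hv.2 (extNbhd_comp_subset_sigmaBag h)

lemma mem_bag_parent (hp : v ∈ p.bag) (hv : v ∈ D.bag (D.parent p.node)) : v ∈ p.parent.bag :=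
  mem_bag.2 ⟨hv, union_extNbhd_subset_union_extNbhd comp_subset_comp_parent (mem_bag.1 hp).2⟩

lemma mem_bag_ofMem_of_adj {t : D.ι} (hu : u ∈ D.alphaSet t) (hut : u ∈ D.bag t)
    (hvt : v ∈ D.bag t) (huv : G.Adj u v) : u ∈ (ofMem hu).bag ∧ v ∈ (ofMem hu).bag := by
  refine ⟨mem_bag_ofMem hu hut, mem_bag.2 ⟨hvt, ?_⟩⟩
  by_cases hv : v ∈ (ofMem hu).comp
  · exact Or.inl hv
  · exact Or.inr ⟨hv, u, mem_comp_ofMem hu, huv.symm⟩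

lemma exists_mem_bag_of_adj (huv : G.Adj u v) : ∃ p : D.CompNode, u ∈ p.bag ∧ v ∈ p.bag := by
  obtain ⟨s, hus, hvs⟩ := D.edge_in_bag u (Finset.mem_univ u) v (Finset.mem_univ v) huv
  obtain ⟨t, ⟨hut, hvt⟩, hroot | hpt⟩ :=
    exists_mem_root_or_parent_not_mem (S := {t | u ∈ D.bag t ∧ v ∈ D.bag t}) ⟨hus, hvs⟩
  · exact ⟨_, mem_bag_ofMem_of_adj
      (mem_alphaSet_of_mem_bag hut (by simp [hroot, sigmaBag_root])) hut hvt huv⟩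
  by_cases huσ : u ∈ D.sigmaBag t
  · have hvσ : v ∉ D.sigmaBag t := fun hvσ =>
      hpt ⟨sigmaBag_subset_bag_parent t huσ, sigmaBag_subset_bag_parent t hvσ⟩
    obtain ⟨hv, hu⟩ := mem_bag_ofMem_of_adj (mem_alphaSet_of_mem_bag hvt hvσ) hvt hut huv.symm
    exact ⟨_, hu, hv⟩
  · exact ⟨_, mem_bag_ofMem_of_adj (mem_alphaSet_of_mem_bag hut huσ) hut hvt huv⟩

lemma eq_ofMem_of_mem_bag {t : D.ι} (hvα : v ∈ D.alphaSet t) (hp : v ∈ p.bag)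
    (hpt : p.node = t) : p = ofMem hvα :=
  eq_of_mem_comp hpt (mem_comp_of_mem_bag hp (hpt ▸ hvα)) (mem_comp_ofMem hvα)

lemma reachable_ofMem {t : D.ι} (hvα : v ∈ D.alphaSet t) (hvt : v ∈ D.bag t) (n : ℕ)
    (hp : v ∈ p.bag) (hpt : D.parent^[n] p.node = t) :
    ((SimpleGraph.fromRel fun s t : D.CompNode => s.parent = t).induce
      {q : D.CompNode | v ∈ q.bag}).Reachable ⟨p, hp⟩ ⟨ofMem hvα, mem_bag_ofMem hvα hvt⟩ := by
  induction n generalizing p with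
  | zero =>
    obtain rfl := eq_ofMem_of_mem_bag hvα hp hpt
    rfl
  | succ n ih =>
    by_cases hpt' : p.node = t
    · obtain rfl := eq_ofMem_of_mem_bag hvα hp hpt'
      rfl
    have hpp : v ∈ p.parent.bag := mem_bag_parent hp
      (RTDOn.mem_bag_parent (mem_bag.1 hp).1 hvt ⟨n + 1, hpt⟩ hpt')
    exact (SimpleGraph.reachable_induce_fromRel_apply (S := {q : D.CompNode | v ∈ q.bag})
      hp hpp).trans (ih hpp hpt)

lemma connected_bags (v : V) :
    ((SimpleGraph.fromRel fun s t : D.CompNode => s.parent = t).induce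
      {q : D.CompNode | v ∈ q.bag}).Connected := by
  obtain ⟨t, hvt, hvα⟩ := exists_mem_bag_mem_alphaSet (D := D) (Finset.mem_univ v)
  refine SimpleGraph.connected_iff_exists_forall_reachable _ |>.2
    ⟨⟨_, mem_bag_ofMem hvα hvt⟩, fun ⟨p, hp⟩ => ?_⟩
  obtain ⟨n, hn⟩ := isDesc_of_mem_alphaSet hvα (mem_bag.1 hp).1
  exact (reachable_ofMem hvα hvt n hp hn).symm

variable (hG : G.Connected)

noncomputable def root : D.CompNode :=
  ofMem (u := hG.nonempty.some) (alphaSet_root (D := D) ▸ Set.mem_univ _)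

lemma comp_root : (root (D := D) hG).comp = Set.univ := by
  simp only [root, ofMem, alphaSet_root, hG.componentIn_univ]

lemma eq_root_of_node_eq_root (h : p.node = D.root) : p = root hG := by
  refine eq_of_mem_comp h (u := p.rep) (p.comp_eq ▸ SimpleGraph.mem_componentIn_self p.rep_mem) ?_
  simp [comp_root]

lemma parent_root : (root hG).parent = root (D := D) hG :=
  eq_root_of_node_eq_root hG D.parent_root

lemma exists_iterate_parent_eq_root (p : D.CompNode) : ∃ n, parent^[n] p = root hG := by
  obtain ⟨n, hn⟩ := D.reaches_root p.node
  exact ⟨n, eq_root_of_node_eq_root hG ((node_iterate_parent n).trans hn)⟩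

end CompNode

variable (D) (hG : G.Connected)

noncomputable def csRefinement : RTD V G where
  ι := D.CompNode
  instFintype := Fintype.ofFinite _
  instDecEq := Classical.decEq _
  root := CompNode.root hG
  parent := CompNode.parent
  parent_root := CompNode.parent_root hG
  reaches_root := CompNode.exists_iterate_parent_eq_root hG
  bag := CompNode.bag
  bag_subset _ := Finset.subset_univ _
  bags_connected v _ := CompNode.connected_bags v
  edge_in_bag _ _ _ _ := CompNode.exists_mem_bag_of_adj

variable {D hG}

lemma gammaSet_csRefinement (p : D.CompNode) :
    (D.csRefinement hG).gammaSet p = p.comp ∪ extNbhd G p.comp := by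
  ext x
  constructor
  · rintro ⟨q, ⟨n, rfl⟩, hx⟩
    exact union_extNbhd_subset_union_extNbhd (CompNode.comp_subset_comp_iterate_parent n)
      (CompNode.mem_bag.1 hx).2
  rintro (hx | hx)
  · obtain ⟨t, hxt, hxα⟩ := exists_mem_bag_mem_alphaSet (D := D) (Finset.mem_univ x)
    obtain ⟨n, hn⟩ := isDesc_of_mem_alphaSet (CompNode.comp_subset_alphaSet hx) hxt
    refine ⟨CompNode.ofMem hxα, ⟨n, ?_⟩, CompNode.mem_bag_ofMem hxα hxt⟩
    exact CompNode.eq_of_mem_comp ((CompNode.node_iterate_parent n).trans hn)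
      (CompNode.comp_subset_comp_iterate_parent n (CompNode.mem_comp_ofMem hxα)) hx
  · exact ⟨p, ⟨0, rfl⟩, CompNode.mem_bag_of_mem_extNbhd hx⟩

lemma sigmaBag_csRefinement (p : D.CompNode) :
    ((D.csRefinement hG).sigmaBag p : Set V) = extNbhd G p.comp := by
  by_cases hp : p.node = D.root
  · obtain rfl := CompNode.eq_root_of_node_eq_root hG hp
    have hσ : (D.csRefinement hG).sigmaBag (CompNode.root hG) = ∅ := sigmaBag_root
    rw [hσ, CompNode.comp_root]
    simp [extNbhd]
  have hp' : p ≠ (D.csRefinement hG).root := fun h => hp (h ▸ rfl)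
  ext x
  rw [sigmaBag_of_ne_root (D := D.csRefinement hG) (t := p) hp', Finset.coe_inter,
    Set.mem_inter_iff]
  constructor
  · rintro ⟨hxp, hxpp⟩
    refine ((CompNode.mem_bag.1 hxp).2).resolve_left fun hx => ?_
    exact notMem_bag_parent_of_mem_alphaSet hp (CompNode.comp_subset_alphaSet hx)
      (CompNode.bag_subset hxpp)
  · intro hx
    have hxp := CompNode.mem_bag_of_mem_extNbhd hx
    exact ⟨hxp, CompNode.mem_bag_parent hxp
      (sigmaBag_subset_bag_parent _ (CompNode.extNbhd_comp_subset_sigmaBag hx))⟩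

lemma alphaSet_csRefinement (p : D.CompNode) : (D.csRefinement hG).alphaSet p = p.comp := by
  unfold alphaSet
  rw [gammaSet_csRefinement, sigmaBag_csRefinement, Set.union_sdiff_right]
  exact sdiff_eq_left.2 (Set.disjoint_left.2 fun _ hx hN => hN.1 hx)

lemma isCSDecomp_csRefinement : IsCSDecomp (D.csRefinement hG) := fun p => by
  rw [alphaSet_csRefinement (D := D) p, sigmaBag_csRefinement (D := D) p]
  exact ⟨p.comp_eq ▸ SimpleGraph.connected_induce_componentIn p.rep_mem, rfl⟩

lemma widthLe_csRefinement {k : ℕ} (hw : D.widthLe k) : (D.csRefinement hG).widthLe k :=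
  fun p => (Finset.card_le_card CompNode.bag_subset).trans (hw p.node)

lemma adhesionLe_csRefinement {l : ℕ} (ha : D.adhesionLe l) :
    (D.csRefinement hG).adhesionLe l := fun p hp => by
  have hnode : p.node ≠ D.root := fun h => hp (CompNode.eq_root_of_node_eq_root hG h)
  exact (Finset.card_le_card (Finset.inter_subset_inter CompNode.bag_subset
    CompNode.bag_subset)).trans (ha p.node hnode)

end RTDOn

/-- Every rooted tree decomposition of width `k` and adhesion width `ℓ`
of a connected graph can be turned into a connectivity-sensitive one of width at most
`k` and adhesion width at most `ℓ`, each of whose bags is contained in some original bag. -/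
theorem stmt6 {V : Type} [Fintype V] [DecidableEq V] (G : SimpleGraph V)
    (hG : G.Connected) (k l : ℕ) (D : RTD V G)
    (hw : D.widthLe k) (ha : D.adhesionLe l) :
    ∃ D' : RTD V G, IsCSDecomp D' ∧ D'.widthLe k ∧ D'.adhesionLe l ∧
      ∀ t : D'.ι, ∃ s : D.ι, D'.bag t ⊆ D.bag s :=
  ⟨D.csRefinement hG, RTDOn.isCSDecomp_csRefinement, RTDOn.widthLe_csRefinement hw,
    RTDOn.adhesionLe_csRefinement ha, fun p => ⟨p.node, RTDOn.CompNode.bag_subset⟩⟩
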